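/- (Closed-form duality gap for the Lasso via the Lipschitzing trick.) Fix B > 0 and consider the modified Lasso problem O(α) = f(Aα) + Σ_i g̃_i(α_i) with f(v) := (1/(2d))‖v − b‖₂² and g̃_i(x) := λ|x| for |x| ≤ B, g̃_i(x) := +∞ for |x| > B. Then g̃_i*(u) = B·max(|u| − λ, 0), and the duality gap gap(α) := f(Aα) + Σ_i g̃_i(α_i) + f*(w) + Σ_i g̃_i*(−a_iᵀw) at w := ∇f(Aα) = (1/d)(Aα − b) equals, for every α with ‖α‖_∞ ≤ B: gap(α) = (1/d)·Σ_{i=1}^n [ α_i·a_iᵀw̃ + B·max(|a_iᵀw̃| − λd, 0) + λd·|α_i| ], where w̃ := Aα − b. -/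

import Mathlib

/-!
STATEMENT 16: closed-form duality gap for the Lasso via the Lipschitzing trick.  With
`f(v) := (1/(2d))‖v − b‖²` and `g̃ᵢ(x) := λ|x|` for `|x| ≤ B` (`+∞` otherwise):
`g̃ᵢ*(u) = B·max(|u| − λ, 0)`, and for every `α` with `‖α‖_∞ ≤ B`, at
`w := ∇f(Aα) = (1/d)(Aα − b)`:
`gap(α) = (1/d) Σᵢ [αᵢ aᵢᵀw̃ + B·max(|aᵢᵀw̃| − λd, 0) + λd|αᵢ|]`, `w̃ := Aα − b`.

The `B`-bounded-support function `g̃ᵢ` is modelled by the real-valued function `λ|·|` on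
`[−B, B]`; its conjugate is `g̃ᵢ*(x) = sup_{|u| ≤ B} (xu − λ|u|)`.
-/

open Finset
open scoped RealInnerProductSpace BigOperators

noncomputable section

/-- `A α`, viewed as a vector of the Euclidean space `ℝ^d`. -/
def Amul {d n : ℕ} (A : Matrix (Fin d) (Fin n) ℝ) (x : Fin n → ℝ) :
    EuclideanSpace ℝ (Fin d) := WithLp.toLp 2 (fun j => ∑ i, A j i * x i)

/-- The `i`-th column `aᵢ` of `A`. -/
def col {d n : ℕ} (A : Matrix (Fin d) (Fin n) ℝ) (i : Fin n) :
    EuclideanSpace ℝ (Fin d) := WithLp.toLp 2 (fun j => A j i)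

/-- The convex conjugate of a function with `B`-bounded support. -/
def conjB (B : ℝ) (g : ℝ → ℝ) (x : ℝ) : ℝ := ⨆ u : Set.Icc (-B) B, x * (u : ℝ) - g u

/-- The convex (Fenchel) conjugate of a function on `ℝ^d`. -/
def conjVec {k : ℕ} (h : EuclideanSpace ℝ (Fin k) → ℝ) (w : EuclideanSpace ℝ (Fin k)) :
    ℝ := ⨆ u : EuclideanSpace ℝ (Fin k), ⟪w, u⟫ - h u

/-!
Both conjugates are suprema of concave functions with explicit maximisers. For `λ|·|` on
`[−B, B]`, `xu − λ|u| ≤ |u|(|x| − λ)`, with equality at `u = ±B` or `u = 0`. For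
`f = (1/(2d))‖· − b‖²`, completing the square gives `f*(w) = ⟪w, b⟫ + (d/2)‖w‖²`. At
`w = w̃/d` the smooth part `f(Aα) + f*(w)` collapses to `(1/d)⟪w̃, Aα⟫ = (1/d) Σᵢ αᵢ aᵢᵀw̃`,
and `g̃ᵢ*(−aᵢᵀw)` rescales to `(1/d)·B·max(|aᵢᵀw̃| − λd, 0)`.
-/

theorem ciSup_eq_of_forall_le_of_eq {ι α : Type*} [ConditionallyCompleteLattice α]
    {f : ι → α} {a : α} (h : ∀ i, f i ≤ a) (i₀ : ι) (h₀ : f i₀ = a) : ⨆ i, f i = a :=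
  haveI : Nonempty ι := ⟨i₀⟩
  le_antisymm (ciSup_le h) (h₀ ▸ le_ciSup ⟨a, Set.forall_mem_range.2 h⟩ i₀)

theorem conjB_mul_abs {B : ℝ} (hB : 0 ≤ B) (lam x : ℝ) :
    conjB B (fun t => lam * |t|) x = B * max (|x| - lam) 0 := by
  have hbound : ∀ u : Set.Icc (-B) B, x * (u : ℝ) - lam * |(u : ℝ)| ≤ B * max (|x| - lam) 0 := by
    rintro ⟨u, hu⟩
    have hxu : x * u ≤ |x| * |u| := (le_abs_self _).trans (abs_mul x u).le
    have huB : |u| ≤ B := abs_le.2 hu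
    calc x * u - lam * |u| ≤ |u| * (|x| - lam) := by linarith
      _ ≤ |u| * max (|x| - lam) 0 := by gcongr; exact le_max_left _ _
      _ ≤ B * max (|x| - lam) 0 := by gcongr
  rcases le_or_gt lam |x| with hx | hx
  · rw [max_eq_left (sub_nonneg.2 hx)] at hbound ⊢
    have hxB : x * (if 0 ≤ x then B else -B) - lam * |if 0 ≤ x then B else -B|
        = B * (|x| - lam) := by
      split_ifs with h
      · rw [abs_of_nonneg h, abs_of_nonneg hB]; ring
      · rw [abs_of_neg (not_le.1 h), abs_neg, abs_of_nonneg hB]; ring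
    refine ciSup_eq_of_forall_le_of_eq hbound ⟨if 0 ≤ x then B else -B, ?_⟩ hxB
    split_ifs <;> constructor <;> linarith
  · rw [max_eq_right (by linarith), mul_zero] at hbound ⊢
    exact ciSup_eq_of_forall_le_of_eq hbound ⟨0, by simp [hB]⟩ (by simp)

theorem conjVec_inv_two_mul_norm_sub_sq {k : ℕ} {c : ℝ} (hc : 0 < c)
    (b w : EuclideanSpace ℝ (Fin k)) :
    conjVec (fun v => 1 / (2 * c) * ‖v - b‖ ^ 2) w = ⟪w, b⟫ + c / 2 * ‖w‖ ^ 2 := by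
  have complete_square : ∀ u : EuclideanSpace ℝ (Fin k),
      ⟪w, u⟫ - 1 / (2 * c) * ‖u - b‖ ^ 2
        = (⟪w, b⟫ + c / 2 * ‖w‖ ^ 2) - 1 / (2 * c) * ‖(u - b) - c • w‖ ^ 2 := by
    intro u
    rw [norm_sub_sq_real (u - b), real_inner_smul_right, inner_sub_left, real_inner_comm w u,
      real_inner_comm w b, norm_smul, Real.norm_eq_abs, abs_of_pos hc]
    field_simp
    ring
  refine ciSup_eq_of_forall_le_of_eq (fun u => ?_) (b + c • w) ?_
  · rw [complete_square u]
    have : 0 ≤ 1 / (2 * c) * ‖(u - b) - c • w‖ ^ 2 := by positivity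
    linarith
  · rw [complete_square]
    simp

theorem inner_Amul {d n : ℕ} (A : Matrix (Fin d) (Fin n) ℝ) (x : Fin n → ℝ)
    (v : EuclideanSpace ℝ (Fin d)) : ⟪v, Amul A x⟫ = ∑ i, x i * ⟪v, col A i⟫ := by
  simp only [Amul, col, PiLp.inner_apply, RCLike.inner_apply, conj_trivial, Finset.mul_sum,
    Finset.sum_mul]
  rw [Finset.sum_comm]
  exact Finset.sum_congr rfl fun i _ => Finset.sum_congr rfl fun j _ => by ring

theorem mul_max_abs_inv_mul_sub {c : ℝ} (hc : 0 < c) (B lam t : ℝ) :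
    B * max (|c⁻¹ * t| - lam) 0 = 1 / c * (B * max (|t| - lam * c) 0) := by
  have hscale : |c⁻¹ * t| - lam = c⁻¹ * (|t| - lam * c) := by
    rw [abs_mul, abs_of_pos (inv_pos.2 hc)]
    field_simp
  conv_lhs => rw [hscale, ← mul_zero c⁻¹, ← mul_max_of_nonneg _ _ (inv_nonneg.2 hc.le)]
  ring

theorem stmt_16_general
    {d n : ℕ} (hd : 0 < d)
    (A : Matrix (Fin d) (Fin n) ℝ) (b : EuclideanSpace ℝ (Fin d))
    (lam B : ℝ) (hB : 0 < B)
    (f : EuclideanSpace ℝ (Fin d) → ℝ)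
    (hf : ∀ v, f v = 1 / (2 * (d : ℝ)) * ‖v - b‖ ^ 2) :
    -- the conjugate of the `B`-truncated `λ|·|`
    (∀ u : ℝ, conjB B (fun x => lam * |x|) u = B * max (|u| - lam) 0) ∧
    -- closed form of the duality gap, for every `α` with `‖α‖_∞ ≤ B`
      ∀ α : Fin n → ℝ, (∀ i, |α i| ≤ B) →
        ∀ w : EuclideanSpace ℝ (Fin d), w = ((d : ℝ))⁻¹ • (Amul A α - b) →
          f (Amul A α) + (∑ i, lam * |α i|) + conjVec f w +
              (∑ i, conjB B (fun x => lam * |x|) (-⟪w, col A i⟫)) =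
            (1 / (d : ℝ)) * ∑ i,
              (α i * ⟪Amul A α - b, col A i⟫ +
                B * max (|⟪Amul A α - b, col A i⟫| - lam * (d : ℝ)) 0 +
                lam * (d : ℝ) * |α i|) := by
  refine ⟨conjB_mul_abs hB.le lam, fun α _ w hw => ?_⟩
  have hd' : (0 : ℝ) < d := Nat.cast_pos.2 hd
  obtain rfl : f = fun v => 1 / (2 * (d : ℝ)) * ‖v - b‖ ^ 2 := funext hf
  set wt := Amul A α - b
  have smooth_part : 1 / (2 * (d : ℝ)) * ‖wt‖ ^ 2 + (⟪w, b⟫ + d / 2 * ‖w‖ ^ 2)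
      = 1 / d * ∑ i, α i * ⟪wt, col A i⟫ := by
    have hAα : Amul A α = wt + b := (sub_add_cancel _ _).symm
    rw [← inner_Amul, hAα, inner_add_right, real_inner_self_eq_norm_sq, hw, real_inner_smul_left,
      norm_smul, Real.norm_eq_abs, abs_of_pos (inv_pos.2 hd')]
    field_simp
    ring
  have separable_part : ∀ i, conjB B (fun x => lam * |x|) (-⟪w, col A i⟫)
      = 1 / d * (B * max (|⟪wt, col A i⟫| - lam * d) 0) := fun i => by
    rw [conjB_mul_abs hB.le, abs_neg, hw, real_inner_smul_left, mul_max_abs_inv_mul_sub hd']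
  simp only [separable_part, Finset.sum_add_distrib, mul_add, Finset.mul_sum] at smooth_part ⊢
  rw [conjVec_inv_two_mul_norm_sub_sq hd', ← smooth_part]
  have regulariser_part : ∀ i, lam * |α i| = 1 / d * (lam * d * |α i|) := fun i => by
    field_simp
  simp only [regulariser_part]
  ring

theorem stmt_16
    {d n : ℕ} (hd : 0 < d)
    (A : Matrix (Fin d) (Fin n) ℝ) (b : EuclideanSpace ℝ (Fin d))
    (lam B : ℝ) (hlam : 0 < lam) (hB : 0 < B)
    (f : EuclideanSpace ℝ (Fin d) → ℝ)
    (hf : ∀ v, f v = 1 / (2 * (d : ℝ)) * ‖v - b‖ ^ 2) :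
    -- the conjugate of the `B`-truncated `λ|·|`
    (∀ u : ℝ, conjB B (fun x => lam * |x|) u = B * max (|u| - lam) 0) ∧
    -- closed form of the duality gap, for every `α` with `‖α‖_∞ ≤ B`
      ∀ α : Fin n → ℝ, (∀ i, |α i| ≤ B) →
        ∀ w : EuclideanSpace ℝ (Fin d), w = ((d : ℝ))⁻¹ • (Amul A α - b) →
          f (Amul A α) + (∑ i, lam * |α i|) + conjVec f w +
              (∑ i, conjB B (fun x => lam * |x|) (-⟪w, col A i⟫)) =
            (1 / (d : ℝ)) * ∑ i,
              (α i * ⟪Amul A α - b, col A i⟫ +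
                B * max (|⟪Amul A α - b, col A i⟫| - lam * (d : ℝ)) 0 +
                lam * (d : ℝ) * |α i|) :=
  stmt_16_general hd A b lam B hB f hf

end
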